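/- Let T0 be a balanced tree and T1 be an unbalanced tree such that T0 ⋌ T1. Then there exists a node z in T1 such that γ_{T1}(z) ≥ 2 and both the left subtree and the right subtree of z are balanced. -/

import Mathlib

/-!
If both trees of a rotation are balanced, they have the same height. Hence a rotation below the
root that unbalances a balanced tree already unbalances the rotated subtree, and by induction we
reach the case of a rotation at the root, where a direct height computation exhibits the node.
-/

/-- Complete rooted planar binary trees. -/
inductive BTree where
  | leaf : BTree
  | node : BTree → BTree → BTree
  deriving DecidableEq

namespace BTree

/-- The height of a tree. -/
def ht : BTree → ℕ
  | leaf => 0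
  | node l r => 1 + max l.ht r.ht

/-- The imbalance value of the root of a tree (`γ`). -/
def imb : BTree → ℤ
  | leaf => 0
  | node l r => (r.ht : ℤ) - l.ht

/-- A tree is balanced if every node has imbalance value in {-1, 0, 1}. -/
def Balanced : BTree → Prop
  | leaf => True
  | node l r =>
      ((r.ht : ℤ) - l.ht = -1 ∨ (r.ht : ℤ) - l.ht = 0 ∨ (r.ht : ℤ) - l.ht = 1) ∧
      Balanced l ∧ Balanced r

/-- The subtree at a position (`false` = go left, `true` = go right). -/
def subtreeAt : BTree → List Bool → Option BTree
  | t, [] => some t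
  | leaf, _ :: _ => none
  | node l _, false :: p => subtreeAt l p
  | node _ r, true :: p => subtreeAt r p

/-- `p` is the position of an internal node of `t`. -/
def IsNodePos (t : BTree) (p : List Bool) : Prop :=
  ∃ l r, subtreeAt t p = some (node l r)

/-- Right rotation whose root `y` is at position `p`: the subtree
`(A ∧ B) ∧ C` at `p` is replaced by `A ∧ (B ∧ C)`. -/
inductive RotAt : BTree → List Bool → BTree → Prop
  | here (a b c : BTree) : RotAt (node (node a b) c) [] (node a (node b c))
  | left {l l' : BTree} (r : BTree) {p : List Bool} :
      RotAt l p l' → RotAt (node l r) (false :: p) (node l' r)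
  | right (l : BTree) {r r' : BTree} {p : List Bool} :
      RotAt r p r' → RotAt (node l r) (true :: p) (node l r')

/-- `t₁` is obtained from `t₀` by a single right rotation (`t₀ ⋌ t₁`). -/
def Rot (t₀ t₁ : BTree) : Prop := ∃ p, RotAt t₀ p t₁

/-- The Tamari order: reflexive transitive closure of right rotation. -/
def Tamari : BTree → BTree → Prop := Relation.ReflTransGen Rot


def HasRightUnbalancedNode (t : BTree) : Prop :=
  ∃ (p : List Bool) (l r : BTree), subtreeAt t p = some (node l r) ∧
    2 ≤ imb (node l r) ∧ Balanced l ∧ Balanced r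

lemma HasRightUnbalancedNode.node_left {l : BTree} (r : BTree) :
    HasRightUnbalancedNode l → HasRightUnbalancedNode (node l r) :=
  fun ⟨p, x, y, hp, hxy⟩ => ⟨false :: p, x, y, hp, hxy⟩

lemma HasRightUnbalancedNode.node_right (l : BTree) {r : BTree} :
    HasRightUnbalancedNode r → HasRightUnbalancedNode (node l r) :=
  fun ⟨p, x, y, hp, hxy⟩ => ⟨true :: p, x, y, hp, hxy⟩

lemma Balanced.node_of_ht_eq_left {l l' r : BTree} (h : Balanced (node l r))
    (hl' : Balanced l') (hht : l'.ht = l.ht) : Balanced (node l' r) :=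
  ⟨hht ▸ h.1, hl', h.2.2⟩

lemma Balanced.node_of_ht_eq_right {l r r' : BTree} (h : Balanced (node l r))
    (hr' : Balanced r') (hht : r'.ht = r.ht) : Balanced (node l r') :=
  ⟨hht ▸ h.1, h.2.1, hr'⟩

lemma RotAt.ht_eq_of_balanced {t t' : BTree} {p : List Bool} (hrot : RotAt t p t')
    (h : Balanced t) (h' : Balanced t') : t'.ht = t.ht := by
  induction hrot with
  | here a b c =>
    obtain ⟨hroot, ⟨hab, -⟩, -⟩ := h
    obtain ⟨hroot', -, hbc, -⟩ := h'
    simp only [ht] at *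
    omega
  | left r _ ih => simp only [ht, ih h.2.1 h'.2.1]
  | right l _ ih => simp only [ht, ih h.2.2 h'.2.2]

/-- A rotation at the root of a balanced tree can only unbalance `b ∧ c` or the new root, and in
both cases the right side becomes the taller one. -/
lemma hasRightUnbalancedNode_of_rotate_root {a b c : BTree}
    (h : Balanced (node (node a b) c)) (h' : ¬ Balanced (node a (node b c))) :
    HasRightUnbalancedNode (node a (node b c)) := by
  obtain ⟨hroot, ⟨hab, ha, hb⟩, hc⟩ := h
  simp only [ht] at hroot hab
  by_cases hbc : 2 ≤ (c.ht : ℤ) - b.ht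
  · exact ⟨[true], b, c, rfl, hbc, hb, hc⟩
  · have hbc_bal : Balanced (node b c) := ⟨by omega, hb, hc⟩
    refine ⟨[], a, node b c, rfl, ?_, ha, hbc_bal⟩
    by_contra hlt
    refine h' ⟨?_, ha, hbc_bal⟩
    simp only [imb, ht] at hlt ⊢
    omega

lemma RotAt.hasRightUnbalancedNode {t t' : BTree} {p : List Bool} (hrot : RotAt t p t')
    (h : Balanced t) (h' : ¬ Balanced t') : HasRightUnbalancedNode t' := by
  induction hrot with
  | here => exact hasRightUnbalancedNode_of_rotate_root h h'
  | @left l l' r _ hl ih =>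
    have hl' : ¬ Balanced l' := fun hl' =>
      h' (h.node_of_ht_eq_left hl' (hl.ht_eq_of_balanced h.2.1 hl'))
    exact (ih h.2.1 hl').node_left r
  | @right l r r' _ hr ih =>
    have hr' : ¬ Balanced r' := fun hr' =>
      h' (h.node_of_ht_eq_right hr' (hr.ht_eq_of_balanced h.2.2 hr'))
    exact (ih h.2.2 hr').node_right l

theorem exists_imbalanced_node_of_unbalancing_rotation (T0 T1 : BTree)
    (h0 : Balanced T0) (h1 : ¬ Balanced T1) (h : Rot T0 T1) :
    ∃ (p : List Bool) (l r : BTree), subtreeAt T1 p = some (node l r) ∧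
      2 ≤ imb (node l r) ∧ Balanced l ∧ Balanced r :=
  let ⟨_, hrot⟩ := h
  hrot.hasRightUnbalancedNode h0 h1

end BTree
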